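/- The Catalan triangle of Shapiro B = [B_{n,k}] defined by B_{0,0}=1 and B_{n+1,k} = B_{n,k-1} + 2 B_{n,k} + B_{n,k+1} for all k ≥ 0 (with B_{n,k}=0 unless n ≥ k ≥ 0) is totally positive. -/

import Mathlib

/-!
The recurrence says that each row of `B` is the previous one multiplied on the right by the
tridiagonal Toeplitz matrix with entries `1, 2, 1`, and this matrix is the product of the two
bidiagonal matrices with ones on the diagonal and on the sub- resp. superdiagonal. Right
multiplication by either of them keeps the maximal minors of a finite family of rows nonnegative:
by multilinearity of the determinant in the columns, each new minor is a sum of old minors over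
nondecreasing choices of columns, and those with a repeated column vanish. One then inducts on the
number of rows and on the first row index: a family containing row `0`, which is `e₀`, shrinks by
Laplace expansion, and otherwise every row is the image of an earlier one.
-/

open Matrix

/-- An infinite matrix is totally positive if all its minors are nonnegative. -/
def IsTotallyPos (M : ℕ → ℕ → ℝ) : Prop :=
  ∀ (m : ℕ) (f g : Fin m → ℕ), StrictMono f → StrictMono g →
    0 ≤ (Matrix.of fun i j => M (f i) (g j)).det

theorem Matrix.det_of_add_eq_sum_piecewise {R n : Type*} [CommRing R] [Fintype n]
    [DecidableEq n] (u v : n → n → R) :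
    (of fun i j => u i j + v i j).det
      = ∑ s : Finset n, (of fun i j => if j ∈ s then u i j else v i j).det := by
  rw [← det_transpose]
  calc _ = detRowAlternating ((fun j i => u i j) + fun j i => v i j) := rfl
    _ = _ := AlternatingMap.map_add_univ _ _ _
    _ = _ := Finset.sum_congr rfl fun s _ => by
      rw [← det_transpose]
      congr 1
      ext i j
      by_cases h : i ∈ s <;> simp [h]

variable {R : Type*} [CommRing R] [PartialOrder R]

def MaximalMinorsNonneg {m : ℕ} (A : Fin m → ℕ → R) : Prop :=
  ∀ g : Fin m → ℕ, StrictMono g → 0 ≤ (of fun i j => A i (g j)).det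

def addShift (v : ℕ → R) (k : ℕ) : R := v k + v (k + 1)

def consZero (v : ℕ → R) : ℕ → R
  | 0 => 0
  | k + 1 => v k

namespace MaximalMinorsNonneg

variable {m : ℕ} {A : Fin m → ℕ → R}

theorem det_nonneg_of_monotone (hA : MaximalMinorsNonneg A) {c : Fin m → ℕ} (hc : Monotone c) :
    0 ≤ (of fun i j => A i (c j)).det := by
  by_cases hinj : Function.Injective c
  · exact hA c (hc.strictMono_of_injective hinj)
  · obtain ⟨j, j', hjj', hne⟩ := Function.not_injective_iff.mp hinj
    rw [det_zero_of_column_eq hne fun i => by simp [hjj']]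

theorem addShift [IsOrderedRing R] (hA : MaximalMinorsNonneg A) :
    MaximalMinorsNonneg fun i => addShift (A i) := by
  intro g hg
  simp only [_root_.addShift]
  rw [det_of_add_eq_sum_piecewise (fun i j => A i (g j)) (fun i j => A i (g j + 1))]
  refine Finset.sum_nonneg fun s _ => ?_
  have hc : Monotone fun j => if j ∈ s then g j else g j + 1 := by
    intro j j' hjj'
    rcases hjj'.lt_or_eq with hlt | rfl
    · have := hg hlt
      dsimp only
      split_ifs <;> omega
    · exact le_rfl
  convert hA.det_nonneg_of_monotone hc using 3
  ext i j
  split_ifs <;> rfl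

theorem consZero (hA : MaximalMinorsNonneg A) : MaximalMinorsNonneg fun i => consZero (A i) := by
  intro g hg
  by_cases hzero : ∃ j, g j = 0
  · obtain ⟨j, hj⟩ := hzero
    rw [det_eq_zero_of_column_eq_zero j fun i => by simp [hj, _root_.consZero]]
  · push Not at hzero
    have hpred : StrictMono fun j => g j - 1 := fun j j' h => by
      have := hg h; have := hzero j; dsimp only; omega
    convert hA _ hpred using 3
    ext i j
    obtain ⟨k, hk⟩ := Nat.exists_eq_succ_of_ne_zero (hzero j)
    simp [hk, _root_.consZero]

end MaximalMinorsNonneg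

theorem maximalMinorsNonneg_of_row_zero_eq_single {m : ℕ} {A : Fin (m + 1) → ℕ → R}
    (h0 : A 0 = Pi.single 0 1) (hA : MaximalMinorsNonneg fun i => A i.succ) :
    MaximalMinorsNonneg A := by
  intro g hg
  by_cases hg0 : g 0 = 0
  · rw [det_succ_row_zero, Fintype.sum_eq_single 0 fun j hj => ?_]
    · convert hA _ (hg.comp Fin.strictMono_succ) using 1
      simp [h0, hg0, submatrix]
    · have hA0 : A 0 (g j) = 0 :=
        h0 ▸ Pi.single_eq_of_ne (hg0 ▸ hg (Fin.pos_iff_ne_zero.mpr hj)).ne' 1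
      simp [hA0]
  · refine (det_eq_zero_of_row_eq_zero 0 fun j => ?_).ge
    rw [of_apply, h0]
    exact Pi.single_eq_of_ne ((Nat.pos_of_ne_zero hg0).trans_le (hg.monotone (Fin.zero_le j))).ne' 1

theorem maximalMinorsNonneg_of_iterate [IsOrderedRing R] {T : (ℕ → R) → ℕ → R}
    (hT : ∀ {m} {A : Fin m → ℕ → R}, MaximalMinorsNonneg A →
      MaximalMinorsNonneg fun i => T (A i))
    {B : ℕ → ℕ → R} (h0 : B 0 = Pi.single 0 1) (hsucc : ∀ n, B (n + 1) = T (B n)) :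
    ∀ {m} {f : Fin m → ℕ}, StrictMono f → MaximalMinorsNonneg fun i => B (f i) := by
  intro m
  induction m with
  | zero => intro f _ g _; simp
  | succ m ih =>
    suffices ∀ (n : ℕ) (f : Fin (m + 1) → ℕ), StrictMono f → f 0 = n →
        MaximalMinorsNonneg fun i => B (f i) from
      fun {f} hf => this _ f hf rfl
    intro n
    induction n with
    | zero =>
      intro f hf hf0
      exact maximalMinorsNonneg_of_row_zero_eq_single (by rw [hf0, h0])
        (ih (hf.comp Fin.strictMono_succ))
    | succ n ihn =>
      intro f hf hf0
      have hf_pos (i : Fin (m + 1)) : f i = (f i - 1) + 1 := by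
        have := hf.monotone (Fin.zero_le i); omega
      have hpred : StrictMono fun i => f i - 1 := fun i j hij => by
        have := hf hij; have := hf_pos i; dsimp only; omega
      convert hT (ihn _ hpred (by omega)) using 2 with i
      rw [hf_pos i, hsucc, Nat.add_sub_cancel]

/-- The Catalan triangle of Shapiro, given by
$B_{n+1,k} = B_{n,k-1} + 2 B_{n,k} + B_{n,k+1}$ for all $k \ge 0$, is totally positive. -/
theorem shapiro_catalan_triangle_tp (B : ℕ → ℕ → ℝ)
    (hB0 : B 0 0 = 1) (hzero : ∀ n k, n < k → B n k = 0)
    (hrec0 : ∀ n, B (n + 1) 0 = 2 * B n 0 + B n 1)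
    (hrec : ∀ n k, B (n + 1) (k + 1)
      = B n k + 2 * B n (k + 1) + B n (k + 2)) :
    IsTotallyPos B := by
  have hrow0 : B 0 = Pi.single 0 1 := by
    funext k
    rcases k with _ | k
    · simp [hB0]
    · simp [hzero 0 (k + 1) k.succ_pos]
  have hrow (n : ℕ) : B (n + 1) = addShift (addShift (consZero (B n))) := by
    funext k
    rcases k with _ | k
    · simp only [hrec0, addShift, consZero, zero_add]; ring
    · simp only [hrec, addShift, consZero]; ring
  intro m f g hf hg
  exact maximalMinorsNonneg_of_iterate (T := fun v => addShift (addShift (consZero v)))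
    (fun hA => hA.consZero.addShift.addShift) hrow0 hrow hf g hg
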